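/- arXiv:2403.04604 — 8 statements merged into one kernel-verified Lean document; each statement's English description precedes it below -/
import Mathlib

section
/- Let d ∈ ℕ, let H : ℝ → Matrix (Fin d) (Fin d) ℂ be a differentiable family of matrices with H(t) Hermitian for every t, let ψ : ℝ → EuclideanSpace ℂ (Fin d) be differentiable with ‖ψ(t)‖ = 1 for every t, and let lam : ℝ → ℝ be differentiable with H(t).mulVec (ψ t) = lam t • ψ t for every t. Then for every t, the derivative of lam at t equals the (real) inner product ⟪ψ t, (deriv H t).mulVec (ψ t)⟫, i.e. lam'(t) = ⟨ψ(t), H'(t) ψ(t)⟩. (Hellmann–Feynman theorem: the first-order variation of a nondegenerate eigenvalue of a Hermitian family equals the expectation value of the variation of the Hamiltonian in the corresponding normalized eigenstate; this is the key computational step δ⟨Ψ_{n,w}|Ĥ_w|Ψ_{n,w}⟩ = ∫ δw ρ_{n,w} used in the proof of Theorem 1.) -/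
/-- Entrywise derivative of a family of matrices. -/
noncomputable def entryDeriv {d : ℕ} (H : ℝ → Matrix (Fin d) (Fin d) ℂ) (t : ℝ) :
    Matrix (Fin d) (Fin d) ℂ :=
  fun i j => deriv (fun s => H s i j) t

/-!
Differentiate the expectation value `⟪ψ s, H s ψ s⟫`, which equals `lam s` because `ψ s` is a unit
eigenvector. Of the three terms of its derivative, the two containing `ψ'` are, by the symmetry of
`H t` and the eigenvalue equation, `lam t` times the derivative of `‖ψ s‖² = 1`, hence vanish; what
is left is `⟪ψ t, H' ψ t⟫`. Since `lam` is real-valued, this complex derivative is real and is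
`deriv lam t`.
-/

open Matrix

section

variable {𝕜 E : Type*} [RCLike 𝕜] [NormedAddCommGroup E] [InnerProductSpace 𝕜 E] [NormedSpace ℝ E]

local notation "⟪" x ", " y "⟫" => inner 𝕜 x y

variable (𝕜) in
theorem HasDerivAt.inner_add_inner_eq_zero_of_norm_eq {ψ : ℝ → E} {ψ' : E} {t c : ℝ}
    (hψ : HasDerivAt ψ ψ' t) (hnorm : ∀ s, ‖ψ s‖ = c) : ⟪ψ t, ψ'⟫ + ⟪ψ', ψ t⟫ = 0 := by
  have hconst : (fun s => ⟪ψ s, ψ s⟫) = fun _ => ((c ^ 2 : ℝ) : 𝕜) := by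
    ext s
    rw [inner_self_eq_norm_sq_to_K, hnorm]
    norm_cast
  have hderiv := hψ.inner 𝕜 hψ
  rw [hconst] at hderiv
  exact hderiv.unique (hasDerivAt_const t _)

theorem hasDerivAt_ofReal_eigenvalue {A : ℝ → E →L[ℝ] E} {A' : E →L[ℝ] E} {ψ : ℝ → E} {ψ' : E}
    {lam : ℝ → ℝ} {t : ℝ} (hA : HasDerivAt A A' t) (hsymm : ∀ x y, ⟪A t x, y⟫ = ⟪x, A t y⟫)
    (hψ : HasDerivAt ψ ψ' t) (hnorm : ∀ s, ‖ψ s‖ = 1)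
    (heig : ∀ s, A s (ψ s) = (lam s : 𝕜) • ψ s) :
    HasDerivAt (fun s => (lam s : 𝕜)) ⟪ψ t, A' (ψ t)⟫ t := by
  have hexpect : (fun s => ⟪ψ s, A s (ψ s)⟫) = fun s => (lam s : 𝕜) := by
    ext s
    rw [heig, inner_smul_right, inner_self_eq_norm_sq_to_K, hnorm]
    simp
  have hderiv := hψ.inner 𝕜 (hA.clm_apply hψ)
  rw [hexpect] at hderiv
  convert hderiv using 1
  rw [inner_add_right, ← hsymm, heig, inner_smul_left, inner_smul_right, RCLike.conj_ofReal]
  linear_combination (-(lam t : 𝕜)) * hψ.inner_add_inner_eq_zero_of_norm_eq 𝕜 hnorm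

end

theorem RCLike.ofReal_deriv_eq_of_hasDerivAt {𝕜 : Type*} [RCLike 𝕜] {f : ℝ → ℝ} {z : 𝕜} {t : ℝ}
    (h : HasDerivAt (fun s => (f s : 𝕜)) z t) : ((deriv f t : ℝ) : 𝕜) = z := by
  have hre : HasDerivAt f (RCLike.re z) t := by
    simpa [Function.comp_def] using (RCLike.reCLM (K := 𝕜)).hasFDerivAt.comp_hasDerivAt t h
  rw [hre.deriv]
  exact (RCLike.ofRealCLM.hasFDerivAt.comp_hasDerivAt t hre).unique h

theorem Matrix.hasDerivAt_restrictScalars_toEuclideanCLM {n : Type*} [Fintype n] [DecidableEq n]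
    {H : ℝ → Matrix n n ℂ} {H' : Matrix n n ℂ} {t : ℝ}
    (hH : ∀ i j, HasDerivAt (fun s => H s i j) (H' i j) t) :
    HasDerivAt (fun s => (toEuclideanCLM (𝕜 := ℂ) (n := n) (H s)).restrictScalars ℝ)
      ((toEuclideanCLM (𝕜 := ℂ) (n := n) H').restrictScalars ℝ) t := by
  set L : Matrix n n ℂ →ₗ[ℂ] EuclideanSpace ℂ n →L[ℝ] EuclideanSpace ℂ n :=
    (ContinuousLinearMap.restrictScalarsₗ ℂ _ _ ℝ ℂ).comp
      (toEuclideanCLM (𝕜 := ℂ) (n := n)).toAlgEquiv.toLinearMap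
  have hsum : ∀ M, L M = ∑ i, ∑ j, M i j • L (single i j 1) := by
    intro M
    conv_lhs => rw [matrix_eq_sum_single M]
    simp [map_sum, ← map_smul, smul_single]
  change HasDerivAt (fun s => L (H s)) (L H') t
  rw [funext fun s => hsum (H s), hsum H']
  have hterm : ∀ i j,
      HasDerivAt (fun s => H s i j • L (single i j 1)) (H' i j • L (single i j 1)) t :=
    fun i j => (hH i j).smul_const (L (single i j 1))
  exact HasDerivAt.fun_sum fun i _ => HasDerivAt.fun_sum fun j _ => hterm i j

theorem hellmann_feynman_general (d : ℕ) (H : ℝ → Matrix (Fin d) (Fin d) ℂ)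
    (hH : ∀ i j, Differentiable ℝ fun t => H t i j)
    (hHerm : ∀ t, (H t).IsHermitian)
    (ψ : ℝ → EuclideanSpace ℂ (Fin d)) (hψ : Differentiable ℝ ψ)
    (hnorm : ∀ t, ‖ψ t‖ = 1)
    (lam : ℝ → ℝ)
    (heig : ∀ t, (H t).mulVec (ψ t) = lam t • ψ t) (t : ℝ) :
    ((deriv lam t : ℝ) : ℂ) =
      inner ℂ (ψ t) (WithLp.toLp 2 ((entryDeriv H t).mulVec (ψ t)) : EuclideanSpace ℂ (Fin d)) := by
  have hA := hasDerivAt_restrictScalars_toEuclideanCLM (H' := entryDeriv H t)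
    fun i j => (hH i j t).hasDerivAt
  have hsymm := isSymmetric_toEuclideanLin_iff.mpr (hHerm t)
  have hAeig : ∀ s, (toEuclideanCLM (𝕜 := ℂ) (n := Fin d) (H s)).restrictScalars ℝ (ψ s) =
      (lam s : ℂ) • ψ s := by
    intro s
    apply WithLp.ofLp_injective
    rw [ContinuousLinearMap.coe_restrictScalars', ofLp_toEuclideanCLM, heig, WithLp.ofLp_smul]
    exact (Complex.coe_smul _ _).symm
  exact RCLike.ofReal_deriv_eq_of_hasDerivAt
    (hasDerivAt_ofReal_eigenvalue hA hsymm (hψ t).hasDerivAt hnorm hAeig)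

/-- Hellmann–Feynman theorem. -/
theorem hellmann_feynman (d : ℕ) (H : ℝ → Matrix (Fin d) (Fin d) ℂ)
    (hH : ∀ i j, Differentiable ℝ fun t => H t i j)
    (hHerm : ∀ t, (H t).IsHermitian)
    (ψ : ℝ → EuclideanSpace ℂ (Fin d)) (hψ : Differentiable ℝ ψ)
    (hnorm : ∀ t, ‖ψ t‖ = 1)
    (lam : ℝ → ℝ) (hlam : Differentiable ℝ lam)
    (heig : ∀ t, (H t).mulVec (ψ t) = lam t • ψ t) (t : ℝ) :
    ((deriv lam t : ℝ) : ℂ) =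
      inner ℂ (ψ t) (WithLp.toLp 2 ((entryDeriv H t).mulVec (ψ t)) : EuclideanSpace ℂ (Fin d)) :=
  hellmann_feynman_general d H hH hHerm ψ hψ hnorm lam heig t
end

section
/- Let d ∈ ℕ, let A be a fixed Hermitian d×d complex matrix, and for w ∈ ℝ^d set H(w) = A + diag(w). Let ψ : ℝ^d → EuclideanSpace ℂ (Fin d) and lam : ℝ^d → ℝ be differentiable (Fréchet) with ‖ψ(w)‖ = 1 and H(w).mulVec (ψ w) = lam w • ψ w for every w. Then for every w and every direction u ∈ ℝ^d, the Fréchet derivative of lam at w applied to u equals Σ_{i} u_i · |ψ(w)_i|². (The electron density ρ(w)_i = |ψ(w)_i|² is the functional derivative of the eigenenergy with respect to the potential.) -/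
/-!
Pairing the eigenvalue equation at `x` with `ψ w` and using the symmetry of `H x` gives
`(λ x - λ w) ⟪ψ w, ψ x⟫ = ⟪H x (ψ w) - λ w • ψ w, ψ x⟫`. Both `λ x - λ w` and
`H x (ψ w) - λ w • ψ w` vanish at `x = w`, so differentiating at `w` leaves
`λ'(w) u ‖ψ w‖² = ⟪H'(w) u (ψ w), ψ w⟫` (Hellmann–Feynman), with no need to differentiate the
normalisation. For `H x = A + diag x` the right-hand side is `∑ i, u i * ‖ψ w i‖ ^ 2`.
-/

section HellmannFeynman

variable {𝕜 V F : Type*} [RCLike 𝕜] [NormedAddCommGroup V] [InnerProductSpace 𝕜 V]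
  [NormedSpace ℝ V] [IsScalarTower ℝ 𝕜 V] [NormedAddCommGroup F] [NormedSpace ℝ F]

theorem LinearMap.IsSymmetric.inner_sub_smul_eigenvector {T : V →ₗ[𝕜] V} (hT : T.IsSymmetric)
    {v' : V} {μ' : ℝ} (hv' : T v' = μ' • v') (v : V) (μ : ℝ) :
    inner 𝕜 (T v - μ • v) v' = (μ' - μ) • inner 𝕜 v v' := by
  simp only [inner_sub_left, hT v, hv', RCLike.real_smul_eq_coe_smul (K := 𝕜), inner_smul_left,
    inner_smul_right, RCLike.conj_ofReal, smul_eq_mul, RCLike.ofReal_sub, sub_mul]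

theorem ofReal_eigenvalue_deriv_eq_inner {H : F → V →ₗ[𝕜] V} {ψ : F → V} {lam : F → ℝ}
    {w : F} {lam' : F →L[ℝ] ℝ} {ψ' L : F →L[ℝ] V}
    (hH : ∀ x, (H x).IsSymmetric) (heig : ∀ x, H x (ψ x) = lam x • ψ x) (hnorm : ‖ψ w‖ = 1)
    (hlam : HasFDerivAt lam lam' w) (hψ : HasFDerivAt ψ ψ' w)
    (hHψ : HasFDerivAt (fun x => H x (ψ w)) L w) (u : F) :
    (lam' u : 𝕜) = inner 𝕜 (L u) (ψ w) := by
  have hid : (fun x => inner 𝕜 (H x (ψ w) - lam w • ψ w) (ψ x))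
      = fun x => (lam x - lam w) • inner 𝕜 (ψ w) (ψ x) :=
    funext fun x => (hH x).inner_sub_smul_eigenvector (heig x) (ψ w) (lam w)
  have hleft := (hHψ.sub_const (lam w • ψ w)).inner 𝕜 hψ
  have hright := (hlam.sub_const (lam w)).smul ((hasFDerivAt_const (ψ w) w).inner 𝕜 hψ)
  rw [hid] at hleft
  have := congrArg (fun D => D u) (hright.unique hleft)
  simpa [heig w, inner_self_eq_norm_sq_to_K, hnorm, RCLike.real_smul_eq_coe_mul] using this

end HellmannFeynman

section Potential

variable {ι : Type*}

theorem Matrix.IsHermitian.add_diagonal_ofReal [DecidableEq ι] {A : Matrix ι ι ℂ}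
    (hA : A.IsHermitian) (x : ι → ℝ) : (A + diagonal fun i => (x i : ℂ)).IsHermitian :=
  hA.add (isHermitian_diagonal_iff.2 fun i => Complex.conj_ofReal (x i))

variable [Fintype ι]

noncomputable def EuclideanSpace.potentialMulCLM (v : EuclideanSpace ℂ ι) :
    EuclideanSpace ℝ ι →L[ℝ] EuclideanSpace ℂ ι :=
  LinearMap.toContinuousLinearMap
    { toFun := fun u => WithLp.toLp 2 fun i => (u i : ℂ) * v i
      map_add' := fun u u' => by ext i; simp [add_mul]
      map_smul' := fun c u => by ext i; simp [mul_assoc] }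

theorem EuclideanSpace.potentialMulCLM_apply (v : EuclideanSpace ℂ ι) (u : EuclideanSpace ℝ ι)
    (i : ι) : potentialMulCLM v u i = u i * v i :=
  rfl

theorem EuclideanSpace.inner_potentialMulCLM_self (v : EuclideanSpace ℂ ι)
    (u : EuclideanSpace ℝ ι) :
    inner ℂ (potentialMulCLM v u) v = ∑ i, (u i * ‖v i‖ ^ 2 : ℝ) := by
  simp only [PiLp.inner_apply, RCLike.inner_apply, potentialMulCLM_apply, map_mul,
    Complex.conj_ofReal]
  push_cast
  exact Finset.sum_congr rfl fun i _ => by rw [mul_left_comm, Complex.mul_conj']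

variable [DecidableEq ι]

theorem Matrix.toEuclideanLin_add_diagonal_apply (A : Matrix ι ι ℂ) (x : EuclideanSpace ℝ ι)
    (v : EuclideanSpace ℂ ι) :
    toEuclideanLin (A + diagonal fun i => (x i : ℂ)) v
      = toEuclideanLin A v + EuclideanSpace.potentialMulCLM v x := by
  ext i
  simp [Matrix.mulVec_diagonal, EuclideanSpace.potentialMulCLM_apply]

end Potential

/-- The functional derivative of the eigenenergy with respect to the potential is
the electron density: the Fréchet derivative of the eigenvalue `lam` at `w` in
direction `u` equals `∑ i, u i * |ψ(w) i|²`. -/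
theorem eigenvalue_fderiv_eq_density (d : ℕ) (A : Matrix (Fin d) (Fin d) ℂ)
    (hA : A.IsHermitian)
    (ψ : EuclideanSpace ℝ (Fin d) → EuclideanSpace ℂ (Fin d))
    (lam : EuclideanSpace ℝ (Fin d) → ℝ)
    (hψ : Differentiable ℝ ψ) (hlam : Differentiable ℝ lam)
    (hnorm : ∀ w, ‖ψ w‖ = 1)
    (heig : ∀ w, (A + Matrix.diagonal fun i => (w i : ℂ)).mulVec (ψ w) = lam w • ψ w)
    (w u : EuclideanSpace ℝ (Fin d)) :
    fderiv ℝ lam w u = ∑ i, u i * ‖ψ w i‖ ^ 2 := by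
  set H := fun x : EuclideanSpace ℝ (Fin d) =>
    Matrix.toEuclideanLin (A + Matrix.diagonal fun i => (x i : ℂ))
  have hH : ∀ x, (H x).IsSymmetric := fun x =>
    Matrix.isSymmetric_toEuclideanLin_iff.2 (hA.add_diagonal_ofReal x)
  have hHψ : HasFDerivAt (fun x => H x (ψ w)) (EuclideanSpace.potentialMulCLM (ψ w)) w := by
    simp only [H, Matrix.toEuclideanLin_add_diagonal_apply]
    exact (EuclideanSpace.potentialMulCLM (ψ w)).hasFDerivAt.const_add _
  have := ofReal_eigenvalue_deriv_eq_inner hH (fun x => congrArg (WithLp.toLp 2) (heig x))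
    (hnorm w) (hlam w).hasFDerivAt (hψ w).hasFDerivAt hHψ u
  rw [EuclideanSpace.inner_potentialMulCLM_self] at this
  exact Complex.ofReal_injective this
end

section
/- Let d ∈ ℕ, let A be a fixed Hermitian d×d complex matrix, and for w ∈ ℝ^d set H(w) = A + diag(w). Let ψ : ℝ^d → EuclideanSpace ℂ (Fin d) and lam : ℝ^d → ℝ be differentiable with ‖ψ(w)‖ = 1 and H(w).mulVec (ψ w) = lam w • ψ w for every w. Fix v ∈ ℝ^d and define E_v : ℝ^d → ℝ by E_v(w) = Re ⟪ψ(w), (A + diag(v)).mulVec (ψ w)⟫, and define the density map ρ : ℝ^d → ℝ^d by ρ(w)_i = |ψ(w)_i|². Then for every w and every u ∈ ℝ^d, the Fréchet derivative of E_v at w applied to u equals Σ_i (v_i − w_i) · (fderiv ρ at w applied to u)_i. (Equation (3): δE_v[n,w] = ∬ (v(r) − w(r)) (δρ_{n,w}(r)/δw(r')) δw(r') dr dr'.) -/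
/-!
Write `ψ' = Dψ(w) u` and `H_v = A + diag v`. Since `H_v` is Hermitian, the variation of
`E_v = Re ⟪ψ, H_v ψ⟫` is `2 Re ⟪H_v ψ, ψ'⟫`. Splitting
`H_v ψ = H_w ψ + diag (v - w) ψ = λ ψ + diag (v - w) ψ`, the `λ`-term drops out because
`‖ψ‖ ≡ 1` forces `Re ⟪ψ, ψ'⟫ = 0`, and what remains, `∑ i (v i - w i) 2 Re (conj (ψ i) ψ' i)`,
is the sum against the variation of the density `|ψ i|²`.
-/

open scoped RealInnerProductSpace Matrix

section RealInnerProductSpace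

variable {E F : Type*} [NormedAddCommGroup E] [NormedSpace ℝ E]
  [NormedAddCommGroup F] [InnerProductSpace ℝ F] {f : E → F} {x : E}

theorem fderiv_norm_sq_comp_apply (hf : DifferentiableAt ℝ f x) (u : E) :
    fderiv ℝ (fun y => ‖f y‖ ^ 2) x u = 2 * ⟪f x, fderiv ℝ f x u⟫ := by
  simp [hf.hasFDerivAt.norm_sq.fderiv]

theorem inner_fderiv_eq_zero_of_norm_eq {c : ℝ} (hf : DifferentiableAt ℝ f x)
    (hc : ∀ y, ‖f y‖ = c) (u : E) : ⟪f x, fderiv ℝ f x u⟫ = 0 := by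
  have h := fderiv_norm_sq_comp_apply hf u
  simp only [hc, fderiv_const_apply, zero_apply] at h
  linarith

theorem fderiv_inner_self_apply_of_isSymmetric {T : F →L[ℝ] F}
    (hT : (T : F →ₗ[ℝ] F).IsSymmetric) (hf : DifferentiableAt ℝ f x) (u : E) :
    fderiv ℝ (fun y => ⟪f y, T (f y)⟫) x u = 2 * ⟪T (f x), fderiv ℝ f x u⟫ := by
  have h : HasFDerivAt (fun y => ⟪f y, T (f y)⟫) _ x :=
    hf.hasFDerivAt.inner ℝ (T.hasFDerivAt.comp x hf.hasFDerivAt)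
  rw [h.fderiv]
  simp only [ContinuousLinearMap.comp_apply, ContinuousLinearMap.prod_apply,
    fderivInnerCLM_apply]
  have hsymm : ⟪f x, T (fderiv ℝ f x u)⟫ = ⟪T (f x), fderiv ℝ f x u⟫ := (hT _ _).symm
  rw [hsymm, real_inner_comm (T (f x))]
  ring

end RealInnerProductSpace

theorem fderiv_piLp_apply {𝕜 ι H : Type*} {E : ι → Type*} [NontriviallyNormedField 𝕜]
    [NormedAddCommGroup H] [NormedSpace 𝕜 H] [∀ i, NormedAddCommGroup (E i)]
    [∀ i, NormedSpace 𝕜 (E i)] [Finite ι] (p : ENNReal) [Fact (1 ≤ p)] {f : H → PiLp p E}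
    {x : H} (hf : DifferentiableAt 𝕜 f x) (u : H) (i : ι) :
    fderiv 𝕜 f x u i = fderiv 𝕜 (fun y => f y i) x u := by
  have h := (hasFDerivWithinAt_piLp p (t := Set.univ)).1 hf.hasFDerivAt.hasFDerivWithinAt i
  rw [hasFDerivWithinAt_univ] at h
  rw [h.fderiv]
  rfl

section EuclideanSpace

variable {ι : Type*} [Fintype ι]

theorem EuclideanSpace.real_inner_eq_re_inner (x y : EuclideanSpace ℂ ι) :
    ⟪x, y⟫ = (inner ℂ x y).re := by
  simp only [PiLp.inner_apply, Complex.re_sum, Complex.inner, RCLike.inner_apply]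

variable [DecidableEq ι]

theorem Matrix.IsHermitian.real_inner_toLp_mulVec {M : Matrix ι ι ℂ} (hM : M.IsHermitian)
    (x y : EuclideanSpace ℂ ι) :
    ⟪(WithLp.toLp 2 (M *ᵥ x) : EuclideanSpace ℂ ι), y⟫ = ⟪x, WithLp.toLp 2 (M *ᵥ y)⟫ := by
  have h : inner ℂ (WithLp.toLp 2 (M *ᵥ x) : EuclideanSpace ℂ ι) y =
      inner ℂ x (WithLp.toLp 2 (M *ᵥ y)) :=
    Matrix.isSymmetric_toEuclideanLin_iff.2 hM x y
  rw [EuclideanSpace.real_inner_eq_re_inner, EuclideanSpace.real_inner_eq_re_inner, h]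

theorem EuclideanSpace.real_inner_toLp_diagonal_mulVec (c : ι → ℝ) (x y : EuclideanSpace ℂ ι) :
    ⟪(WithLp.toLp 2 (Matrix.diagonal (fun i => (c i : ℂ)) *ᵥ x) : EuclideanSpace ℂ ι), y⟫ =
      ∑ i, c i * ⟪x i, y i⟫ := by
  simp only [PiLp.inner_apply, Matrix.mulVec_diagonal, ← Complex.real_smul,
    real_inner_smul_left]

end EuclideanSpace

theorem Matrix.add_diagonal_mulVec_eq {R n : Type*} [CommRing R] [Fintype n] [DecidableEq n]
    {A : Matrix n n R} {w x y : n → R} (h : (A + diagonal w) *ᵥ x = y) (v : n → R) :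
    (A + diagonal v) *ᵥ x = y + diagonal (fun i => v i - w i) *ᵥ x := by
  rw [← h, ← add_mulVec, add_assoc, diagonal_add]
  simp only [add_sub_cancel]

theorem potential_functional_variation_general (d : ℕ) (A : Matrix (Fin d) (Fin d) ℂ)
    (hA : A.IsHermitian)
    (ψ : EuclideanSpace ℝ (Fin d) → EuclideanSpace ℂ (Fin d))
    (lam : EuclideanSpace ℝ (Fin d) → ℝ)
    (hψ : Differentiable ℝ ψ)
    (hnorm : ∀ w, ‖ψ w‖ = 1)
    (heig : ∀ w, (A + Matrix.diagonal fun i => (w i : ℂ)).mulVec (ψ w) = lam w • ψ w)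
    (v : EuclideanSpace ℝ (Fin d)) (w u : EuclideanSpace ℝ (Fin d)) :
    fderiv ℝ (fun w' => (inner ℂ (ψ w')
        (WithLp.toLp 2 ((A + Matrix.diagonal fun i => (v i : ℂ)).mulVec (ψ w')) :
          EuclideanSpace ℂ (Fin d)) : ℂ).re) w u =
      ∑ i, (v i - w i) *
        fderiv ℝ (fun w' => (show EuclideanSpace ℝ (Fin d) from WithLp.toLp 2 (fun i => ‖ψ w' i‖ ^ 2))) w u i := by
  let M := A + Matrix.diagonal fun i => (v i : ℂ)
  let T : EuclideanSpace ℂ (Fin d) →L[ℝ] EuclideanSpace ℂ (Fin d) :=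
    LinearMap.toContinuousLinearMap ((Matrix.toEuclideanLin M).restrictScalars ℝ)
  have hT : (T : EuclideanSpace ℂ (Fin d) →ₗ[ℝ] EuclideanSpace ℂ (Fin d)).IsSymmetric :=
    (hA.add (Matrix.isHermitian_diagonal_of_self_adjoint _
      (funext fun i => Complex.conj_ofReal _))).real_inner_toLp_mulVec
  have hE : (fun w' => (inner ℂ (ψ w') (WithLp.toLp 2 (M *ᵥ ψ w')) : ℂ).re) =
      fun w' => ⟪ψ w', T (ψ w')⟫ :=
    funext fun w' => (EuclideanSpace.real_inner_eq_re_inner _ _).symm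
  have hTψ : T (ψ w) = lam w • ψ w +
      WithLp.toLp 2 (Matrix.diagonal (fun i => ((v i - w i : ℝ) : ℂ)) *ᵥ ψ w) := by
    change WithLp.toLp 2 (M *ᵥ ψ w) = _
    rw [Matrix.add_diagonal_mulVec_eq (heig w)]
    simp only [Complex.ofReal_sub, WithLp.toLp_add, WithLp.toLp_smul, WithLp.toLp_ofLp]
  have hψi (i : Fin d) : DifferentiableAt ℝ (fun w' => ψ w' i) w :=
    (differentiableAt_piLp 2).1 (hψ w) i
  have hρ : DifferentiableAt ℝ (fun w' => (show EuclideanSpace ℝ (Fin d) from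
      WithLp.toLp 2 (fun i => ‖ψ w' i‖ ^ 2))) w :=
    (differentiableAt_piLp 2).2 fun i => (hψi i).norm_sq ℂ
  rw [hE, fderiv_inner_self_apply_of_isSymmetric hT (hψ w), hTψ, inner_add_left,
    real_inner_smul_left, inner_fderiv_eq_zero_of_norm_eq (hψ w) hnorm, mul_zero, zero_add,
    EuclideanSpace.real_inner_toLp_diagonal_mulVec, Finset.mul_sum]
  refine Finset.sum_congr rfl fun i _ => ?_
  rw [fderiv_piLp_apply 2 hρ u i, fderiv_norm_sq_comp_apply (hψi i), fderiv_piLp_apply 2 (hψ w)]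
  ring

/-- Equation (3) of the paper: the first-order variation of the excited-state
potential functional `E_v(w) = Re ⟪ψ(w), (A + diag v) ψ(w)⟫` in direction `u`
equals `∑ i (v i - w i) * (δρ/δw · u) i`, where `ρ(w) i = |ψ(w) i|²`. -/
theorem potential_functional_variation (d : ℕ) (A : Matrix (Fin d) (Fin d) ℂ)
    (hA : A.IsHermitian)
    (ψ : EuclideanSpace ℝ (Fin d) → EuclideanSpace ℂ (Fin d))
    (lam : EuclideanSpace ℝ (Fin d) → ℝ)
    (hψ : Differentiable ℝ ψ) (hlam : Differentiable ℝ lam)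
    (hnorm : ∀ w, ‖ψ w‖ = 1)
    (heig : ∀ w, (A + Matrix.diagonal fun i => (w i : ℂ)).mulVec (ψ w) = lam w • ψ w)
    (v : EuclideanSpace ℝ (Fin d)) (w u : EuclideanSpace ℝ (Fin d)) :
    fderiv ℝ (fun w' => (inner ℂ (ψ w')
        (WithLp.toLp 2 ((A + Matrix.diagonal fun i => (v i : ℂ)).mulVec (ψ w')) :
          EuclideanSpace ℂ (Fin d)) : ℂ).re) w u =
      ∑ i, (v i - w i) *
        fderiv ℝ (fun w' => (show EuclideanSpace ℝ (Fin d) from WithLp.toLp 2 (fun i => ‖ψ w' i‖ ^ 2))) w u i :=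
  potential_functional_variation_general d A hA ψ lam hψ hnorm heig v w u
end

section
/- (Theorem 1) Let d ∈ ℕ, let A be a fixed Hermitian d×d complex matrix, and for w ∈ ℝ^d set H(w) = A + diag(w). Let ψ : ℝ^d → EuclideanSpace ℂ (Fin d) and lam : ℝ^d → ℝ be differentiable with ‖ψ(w)‖ = 1 and H(w).mulVec (ψ w) = lam w • ψ w for every w. Fix v ∈ ℝ^d and define E_v(w) = Re ⟪ψ(w), (A + diag(v)).mulVec (ψ w)⟫. If w₀ ∈ ℝ^d is such that v − w₀ is a constant vector (v_i − (w₀)_i = c for all i, for some c ∈ ℝ), then the Fréchet derivative of E_v at w₀ is the zero linear map: E_v is stationary at w₀. -/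
/-!
If `S` is symmetric and `S (f x) = 0`, the derivative `⟪f x, S f'⟫ + ⟪f', S (f x)⟫` of
`⟪f, S f⟫` at `x` vanishes, the first term being `⟪S (f x), f'⟫`. If instead `T (f x) = r • f x`
with `r` real and `‖f‖ = 1`, then `⟪f, T f⟫ = ⟪f, (T - r) f⟫ + r`, so `⟪f, T f⟫` is stationary
at `x` too. When `v - w₀` is the constant `c`, `ψ w₀` is an eigenvector of `A + diag v` with
eigenvalue `lam w₀ + c`, and `E_v` is the real part of such a quadratic form.
-/

open scoped InnerProductSpace

section QuadraticForm

variable {𝕜 E F : Type*} [RCLike 𝕜] [NormedAddCommGroup E] [InnerProductSpace 𝕜 E]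
  [NormedSpace ℝ E] [IsScalarTower ℝ 𝕜 E] [NormedAddCommGroup F] [NormedSpace ℝ F]
  {T : E →L[𝕜] E} {f : F → E} {f' : F →L[ℝ] E} {x : F}

theorem hasFDerivAt_inner_map_self_of_map_eq_zero (hT : (T : E →ₗ[𝕜] E).IsSymmetric)
    (hf : HasFDerivAt f f' x) (hx : T (f x) = 0) :
    HasFDerivAt (fun y => ⟪f y, T (f y)⟫_𝕜) (0 : F →L[ℝ] 𝕜) x := by
  refine (hf.inner 𝕜 ((T.restrictScalars ℝ).hasFDerivAt.comp x hf)).congr_fderiv ?_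
  ext u
  have hsymm := hT (f x) (f' u)
  simp only [ContinuousLinearMap.coe_coe, hx] at hsymm
  simp [← hsymm, hx]

theorem hasFDerivAt_inner_map_self_of_eigenvector (hT : (T : E →ₗ[𝕜] E).IsSymmetric)
    (hnorm : ∀ y, ‖f y‖ = 1) (hf : HasFDerivAt f f' x) {r : ℝ} (hx : T (f x) = (r : 𝕜) • f x) :
    HasFDerivAt (fun y => ⟪f y, T (f y)⟫_𝕜) (0 : F →L[ℝ] 𝕜) x := by
  set S := T - (r : 𝕜) • ContinuousLinearMap.id 𝕜 E
  have hS : (S : E →ₗ[𝕜] E).IsSymmetric := fun a b => by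
    have hTab := hT a b
    simp only [ContinuousLinearMap.coe_coe] at hTab ⊢
    simp only [S, sub_apply, smul_apply, ContinuousLinearMap.id_apply, inner_sub_left,
      inner_sub_right, inner_smul_real_left, inner_smul_real_right, hTab]
  have hSx : S (f x) = 0 := by simp [S, hx]
  have hshift : ∀ y, ⟪f y, T (f y)⟫_𝕜 = ⟪f y, S (f y)⟫_𝕜 + r := fun y => by
    simp only [S, sub_apply, smul_apply, ContinuousLinearMap.id_apply, inner_sub_right,
      inner_smul_real_right, inner_self_eq_norm_sq_to_K, hnorm, RCLike.ofReal_one, one_pow,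
      RCLike.real_smul_eq_coe_mul, mul_one, sub_add_cancel]
  simpa only [hshift] using (hasFDerivAt_inner_map_self_of_map_eq_zero hS hf hSx).add_const (r : 𝕜)

end QuadraticForm

namespace Matrix

variable {n 𝕜 R : Type*} [DecidableEq n]

theorem IsHermitian.add_diagonal_ofReal_s4 [RCLike 𝕜] {A : Matrix n n 𝕜} (hA : A.IsHermitian)
    (v : n → ℝ) : (A + diagonal fun i => (v i : 𝕜)).IsHermitian :=
  hA.add <| isHermitian_diagonal_of_self_adjoint _ <| by ext; simp

theorem diagonal_mulVec_of_sub_eq_const [Fintype n] [CommRing R] {v w : n → R} {c : R}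
    (h : ∀ i, v i - w i = c) (x : n → R) : diagonal v *ᵥ x = diagonal w *ᵥ x + c • x := by
  ext i
  simp only [mulVec_diagonal, ← h i, Pi.add_apply, Pi.smul_apply, smul_eq_mul]
  ring

end Matrix

theorem potential_functional_stationary_general (d : ℕ) (A : Matrix (Fin d) (Fin d) ℂ)
    (hA : A.IsHermitian)
    (ψ : EuclideanSpace ℝ (Fin d) → EuclideanSpace ℂ (Fin d))
    (lam : EuclideanSpace ℝ (Fin d) → ℝ)
    (hψ : Differentiable ℝ ψ)
    (hnorm : ∀ w, ‖ψ w‖ = 1)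
    (heig : ∀ w, (A + Matrix.diagonal fun i => (w i : ℂ)).mulVec (ψ w) = lam w • ψ w)
    (v w₀ : EuclideanSpace ℝ (Fin d))
    (hconst : ∃ c : ℝ, ∀ i, v i - w₀ i = c) :
    fderiv ℝ (fun w' => (inner ℂ (ψ w')
        (WithLp.toLp 2 ((A + Matrix.diagonal fun i => (v i : ℂ)).mulVec (ψ w')) :
          EuclideanSpace ℂ (Fin d)) : ℂ).re) w₀ = 0 := by
  obtain ⟨c, hc⟩ := hconst
  set T : EuclideanSpace ℂ (Fin d) →L[ℂ] EuclideanSpace ℂ (Fin d) :=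
    Matrix.toEuclideanCLM (n := Fin d) (𝕜 := ℂ) (A + Matrix.diagonal fun i => (v i : ℂ))
  have hT : (T : EuclideanSpace ℂ (Fin d) →ₗ[ℂ] EuclideanSpace ℂ (Fin d)).IsSymmetric := by
    rw [Matrix.coe_toEuclideanCLM_eq_toEuclideanLin, Matrix.isSymmetric_toEuclideanLin_iff]
    exact hA.add_diagonal_ofReal_s4 v
  have hTψ : T (ψ w₀) = ((lam w₀ + c : ℝ) : ℂ) • ψ w₀ := by
    have hshift := Matrix.diagonal_mulVec_of_sub_eq_const (v := fun i => (v i : ℂ))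
      (w := fun i => (w₀ i : ℂ)) (c := c) (fun i => by rw [← hc i, Complex.ofReal_sub]) (ψ w₀).ofLp
    ext i
    rw [Matrix.ofLp_toEuclideanCLM, Matrix.add_mulVec, hshift, ← add_assoc, ← Matrix.add_mulVec,
      heig]
    simp only [Complex.coe_smul, Pi.add_apply, Pi.smul_apply, Complex.real_smul,
      Complex.ofReal_add, PiLp.smul_apply, smul_eq_mul]
    ring
  have hE := (Complex.reCLM.hasFDerivAt.comp w₀
    (hasFDerivAt_inner_map_self_of_eigenvector hT hnorm (hψ w₀).hasFDerivAt hTψ))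
  exact hE.fderiv.trans (ContinuousLinearMap.comp_zero _)

/-- Theorem 1 of the paper: the excited-state potential functional
`E_v(w) = Re ⟪ψ(w), (A + diag v) ψ(w)⟫` is stationary at `w₀` whenever the trial
potential `w₀` differs from the physical potential `v` by at most a constant. -/
theorem potential_functional_stationary (d : ℕ) (A : Matrix (Fin d) (Fin d) ℂ)
    (hA : A.IsHermitian)
    (ψ : EuclideanSpace ℝ (Fin d) → EuclideanSpace ℂ (Fin d))
    (lam : EuclideanSpace ℝ (Fin d) → ℝ)
    (hψ : Differentiable ℝ ψ) (hlam : Differentiable ℝ lam)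
    (hnorm : ∀ w, ‖ψ w‖ = 1)
    (heig : ∀ w, (A + Matrix.diagonal fun i => (w i : ℂ)).mulVec (ψ w) = lam w • ψ w)
    (v w₀ : EuclideanSpace ℝ (Fin d))
    (hconst : ∃ c : ℝ, ∀ i, v i - w₀ i = c) :
    fderiv ℝ (fun w' => (inner ℂ (ψ w')
        (WithLp.toLp 2 ((A + Matrix.diagonal fun i => (v i : ℂ)).mulVec (ψ w')) :
          EuclideanSpace ℂ (Fin d)) : ℂ).re) w₀ = 0 :=
  potential_functional_stationary_general d A hA ψ lam hψ hnorm heig v w₀ hconst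
end

section
/- (Theorem 2, stationarity) Let d ∈ ℕ, let A be a Hermitian d×d complex matrix, and let ψ : ℝ^d → EuclideanSpace ℂ (Fin d), lam : ℝ^d → ℝ be differentiable with ‖ψ(w)‖ = 1 and (A + diag(w)).mulVec (ψ w) = lam w • ψ w for every w. Let W : ℝ^d → ℝ^d be differentiable, fix v ∈ ℝ^d, and define E_v(w_s) = Re ⟪ψ(W(w_s)), (A + diag(v)).mulVec (ψ (W(w_s)))⟫. If w_s⁰ ∈ ℝ^d is such that v − W(w_s⁰) is a constant vector (all components equal), then the Fréchet derivative of E_v at w_s⁰ is the zero linear map: E_v is stationary with respect to variations of the trial noninteracting potential w_s when the mapped interacting potential W(w_s) equals the physical potential v up to a constant. -/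
/-!
Along a differentiable family `ψ` of vectors of constant norm, `ψ'` is orthogonal to `ψ`
(differentiate `‖ψ‖² = const`), so for a symmetric `T` the derivative
`2 Re ⟪T ψ, ψ'⟫` of the expectation value `Re ⟪ψ, T ψ⟫` vanishes wherever `ψ` is an
eigenvector of `T`. If `v - W(ws₀) = c` is constant, then `A + diag v = (A + diag W(ws₀)) + c`,
so `ψ(W(ws₀))` is an eigenvector of `A + diag v`, and the chain rule through `W` finishes.
-/

open Filter Topology RCLike Matrix

section Stationary

variable {𝕜 E F : Type*} [RCLike 𝕜] [NormedAddCommGroup E] [InnerProductSpace 𝕜 E]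
  [NormedSpace ℝ E] [NormedAddCommGroup F] [NormedSpace ℝ F]
  {ψ : F → E} {D : F →L[ℝ] E} {w₀ : F}

theorem re_inner_fderiv_eq_zero_of_norm_eq (hψ : HasFDerivAt ψ D w₀)
    (hnorm : ∀ᶠ w in 𝓝 w₀, ‖ψ w‖ = ‖ψ w₀‖) (u : F) :
    re (inner 𝕜 (ψ w₀) (D u)) = 0 := by
  have hsq : HasFDerivAt (fun w => re (inner 𝕜 (ψ w) (ψ w)))
      (reCLM.comp ((fderivInnerCLM 𝕜 (ψ w₀, ψ w₀)).comp (D.prod D))) w₀ :=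
    reCLM.hasFDerivAt.comp w₀ (hψ.inner 𝕜 hψ)
  have hconst : HasFDerivAt (fun w => re (inner 𝕜 (ψ w) (ψ w))) (0 : F →L[ℝ] ℝ) w₀ :=
    (hasFDerivAt_const (‖ψ w₀‖ ^ 2) w₀).congr_of_eventuallyEq <|
      hnorm.mono fun w hw => by simp only [inner_self_eq_norm_sq, hw]
  have h := congrArg (· u) (hsq.unique hconst)
  simp only [ContinuousLinearMap.comp_apply, ContinuousLinearMap.prod_apply, fderivInnerCLM_apply,
    reCLM_apply, map_add, _root_.zero_apply] at h
  rw [inner_re_symm (D u)] at h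
  linarith

theorem LinearMap.IsSymmetric.hasFDerivAt_re_inner_apply_self_zero_of_eigenvector
    {T : E →L[𝕜] E} (hT : (T : E →ₗ[𝕜] E).IsSymmetric) (hψ : HasFDerivAt ψ D w₀)
    (hnorm : ∀ᶠ w in 𝓝 w₀, ‖ψ w‖ = ‖ψ w₀‖) {μ : ℝ}
    (heig : T (ψ w₀) = (μ : 𝕜) • ψ w₀) :
    HasFDerivAt (fun w => re (inner 𝕜 (ψ w) (T (ψ w)))) (0 : F →L[ℝ] ℝ) w₀ := by
  refine (reCLM.hasFDerivAt.comp w₀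
    (hψ.inner 𝕜 ((T.restrictScalars ℝ).hasFDerivAt.comp w₀ hψ))).congr_fderiv ?_
  ext u
  simp only [ContinuousLinearMap.comp_apply, ContinuousLinearMap.prod_apply, fderivInnerCLM_apply,
    ContinuousLinearMap.coe_restrictScalars', Function.comp_apply, reCLM_apply, map_add]
  rw [← hT.apply_clm, inner_re_symm (D u), heig, inner_smul_left, conj_ofReal, re_ofReal_mul,
    re_inner_fderiv_eq_zero_of_norm_eq hψ hnorm u]
  simp

end Stationary

theorem Matrix.add_diagonal_mulVec_of_eq_add_const {n R : Type*} [Fintype n] [DecidableEq n]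
    [CommSemiring R] (A : Matrix n n R) {v w : n → R} {c : R} (h : ∀ i, v i = w i + c)
    (x : n → R) : (A + diagonal v) *ᵥ x = (A + diagonal w) *ᵥ x + c • x := by
  have hdiag : diagonal v = diagonal w + c • (1 : Matrix n n R) := by
    ext i j
    rcases eq_or_ne i j with rfl | hij
    · simp [h]
    · simp [hij]
  rw [hdiag, ← add_assoc, add_mulVec, smul_mulVec, one_mulVec]

theorem ks_potential_functional_stationary_general (d : ℕ) (A : Matrix (Fin d) (Fin d) ℂ)
    (hA : A.IsHermitian)
    (ψ : EuclideanSpace ℝ (Fin d) → EuclideanSpace ℂ (Fin d))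
    (lam : EuclideanSpace ℝ (Fin d) → ℝ)
    (hψ : Differentiable ℝ ψ)
    (hnorm : ∀ w, ‖ψ w‖ = 1)
    (heig : ∀ w, (A + Matrix.diagonal fun i => (w i : ℂ)).mulVec (ψ w) = lam w • ψ w)
    (W : EuclideanSpace ℝ (Fin d) → EuclideanSpace ℝ (Fin d))
    (hW : Differentiable ℝ W)
    (v ws₀ : EuclideanSpace ℝ (Fin d))
    (hconst : ∃ c : ℝ, ∀ i, v i - W ws₀ i = c) :
    fderiv ℝ (fun ws' => (inner ℂ (ψ (W ws'))
        (WithLp.toLp 2 ((A + Matrix.diagonal fun i => (v i : ℂ)).mulVec (ψ (W ws'))) :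
          EuclideanSpace ℂ (Fin d)) : ℂ).re) ws₀ = 0 := by
  obtain ⟨c, hc⟩ := hconst
  set M := A + diagonal fun i => (v i : ℂ)
  have hM : M.IsHermitian :=
    hA.add (isHermitian_diagonal_of_self_adjoint _ (funext fun i => Complex.conj_ofReal _))
  let T := (toEuclideanLin M).toContinuousLinearMap
  have heig₀ : T (ψ (W ws₀)) = ((lam (W ws₀) + c : ℝ) : ℂ) • ψ (W ws₀) := by
    have hshift : ∀ i, (v i : ℂ) = (W ws₀ i : ℂ) + c := fun i => by
      rw [← hc i]; push_cast; ring
    calc T (ψ (W ws₀)) = WithLp.toLp 2 (M *ᵥ ψ (W ws₀)) := rfl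
      _ = WithLp.toLp 2 (lam (W ws₀) • (ψ (W ws₀)).ofLp + (c : ℂ) • (ψ (W ws₀)).ofLp) := by
        rw [add_diagonal_mulVec_of_eq_add_const A hshift, heig]
      _ = _ := by
        ext i
        simp only [Complex.coe_smul, Pi.add_apply, Pi.smul_apply, Complex.real_smul,
          Complex.ofReal_add, PiLp.smul_apply, smul_eq_mul]
        ring
  have hstat :=
    (isSymmetric_toEuclideanLin_iff.mpr hM).hasFDerivAt_re_inner_apply_self_zero_of_eigenvector
      (hψ (W ws₀)).hasFDerivAt (.of_forall fun w => (hnorm w).trans (hnorm _).symm) heig₀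
  exact ((hstat.comp ws₀ (hW ws₀).hasFDerivAt).congr_fderiv
    (ContinuousLinearMap.zero_comp _)).fderiv

/-- Theorem 2 of the paper, stationarity: the excited-state Kohn–Sham functional
`E_v(w_s) = Re ⟪ψ(W(w_s)), (A + diag v) ψ(W(w_s))⟫` is stationary with respect to
variations of the trial noninteracting potential `w_s` at any point `ws₀` where
the mapped interacting potential `W(ws₀)` equals the physical potential `v` up to
a constant. -/
theorem ks_potential_functional_stationary (d : ℕ) (A : Matrix (Fin d) (Fin d) ℂ)
    (hA : A.IsHermitian)
    (ψ : EuclideanSpace ℝ (Fin d) → EuclideanSpace ℂ (Fin d))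
    (lam : EuclideanSpace ℝ (Fin d) → ℝ)
    (hψ : Differentiable ℝ ψ) (hlam : Differentiable ℝ lam)
    (hnorm : ∀ w, ‖ψ w‖ = 1)
    (heig : ∀ w, (A + Matrix.diagonal fun i => (w i : ℂ)).mulVec (ψ w) = lam w • ψ w)
    (W : EuclideanSpace ℝ (Fin d) → EuclideanSpace ℝ (Fin d))
    (hW : Differentiable ℝ W)
    (v ws₀ : EuclideanSpace ℝ (Fin d))
    (hconst : ∃ c : ℝ, ∀ i, v i - W ws₀ i = c) :
    fderiv ℝ (fun ws' => (inner ℂ (ψ (W ws'))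
        (WithLp.toLp 2 ((A + Matrix.diagonal fun i => (v i : ℂ)).mulVec (ψ (W ws'))) :
          EuclideanSpace ℂ (Fin d)) : ℂ).re) ws₀ = 0 :=
  ks_potential_functional_stationary_general d A hA ψ lam hψ hnorm heig W hW v ws₀ hconst
end

section
/- (Converse of Theorem 2) Let d ∈ ℕ, let A be a Hermitian d×d complex matrix, let ψ : ℝ^d → EuclideanSpace ℂ (Fin d), lam : ℝ^d → ℝ be differentiable with ‖ψ(w)‖ = 1 and (A + diag(w)).mulVec (ψ w) = lam w • ψ w for every w, and let W : ℝ^d → ℝ^d be differentiable. Fix v ∈ ℝ^d, define E_v(w_s) = Re ⟪ψ(W(w_s)), (A + diag(v)).mulVec (ψ (W(w_s)))⟫ and (ρ∘W)(w_s)_i = |ψ(W(w_s))_i|². Let w_s⁰ ∈ ℝ^d and suppose every x ∈ ℝ^d that is Euclidean-orthogonal to the range of the linear map u ↦ fderiv (ρ∘W) at w_s⁰ applied to u is a real multiple of 𝟙 = (1,…,1). If the Fréchet derivative of E_v at w_s⁰ is zero, then v − W(w_s⁰) is a constant vector. -/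
/-!
Put `φ = ψ ∘ W`, `w₀ = W ws₀`, `λ₀ = lam w₀` and `c = w₀ - λ₀ 𝟙`. For every `ws`,
`E_v(ws) = ⟪φ, (A + diag c) φ⟫ + ⟪v - c, ρ(φ)⟫`. Since `A + diag c` is Hermitian and kills
`φ(ws₀)`, the first term is stationary at `ws₀` (this is the Hellmann–Feynman argument). Hence
`dE_v(ws₀) = 0` says that `v - c` is orthogonal to the range of `d(ρ ∘ W)(ws₀)`, so `v - c`, and
with it `v - w₀`, is constant by the nondegeneracy assumption.
-/

open Matrix

theorem hasFDerivAt_inner_apply_self_of_apply_eq_zero {𝕜 E H : Type*} [RCLike 𝕜]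
    [NormedAddCommGroup E] [NormedSpace ℝ E] [NormedAddCommGroup H] [InnerProductSpace 𝕜 H]
    [NormedSpace ℝ H] [IsScalarTower ℝ 𝕜 H] {T : H →L[𝕜] H} (hT : (T : H →ₗ[𝕜] H).IsSymmetric)
    {φ : E → H} {x₀ : E} (hφ : DifferentiableAt ℝ φ x₀) (hx₀ : T (φ x₀) = 0) :
    HasFDerivAt (fun x => inner 𝕜 (φ x) (T (φ x))) (0 : E →L[ℝ] 𝕜) x₀ := by
  have hTφ : HasFDerivAt (fun x => T (φ x)) ((T.restrictScalars ℝ).comp (fderiv ℝ φ x₀)) x₀ :=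
    (T.restrictScalars ℝ).hasFDerivAt.comp x₀ hφ.hasFDerivAt
  convert hφ.hasFDerivAt.inner 𝕜 hTφ using 1
  ext z
  have := hT (φ x₀) (fderiv ℝ φ x₀ z)
  simp only [ContinuousLinearMap.coe_coe] at this
  simp [← this, hx₀]

section

variable {ι : Type*} [Fintype ι]

noncomputable def density (x : EuclideanSpace ℂ ι) : EuclideanSpace ℝ ι :=
  WithLp.toLp 2 fun i => ‖x i‖ ^ 2

theorem differentiable_density : Differentiable ℝ (density : EuclideanSpace ℂ ι → EuclideanSpace ℝ ι) :=
  differentiable_euclidean.2 fun i =>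
    (((EuclideanSpace.proj (𝕜 := ℂ) i).restrictScalars ℝ).differentiable.norm_sq ℂ :)

noncomputable def expectation (H : Matrix ι ι ℂ) (x : EuclideanSpace ℂ ι) : ℝ :=
  (inner ℂ x (WithLp.toLp 2 (H *ᵥ x) : EuclideanSpace ℂ ι)).re

variable [DecidableEq ι]

theorem expectation_add_diagonal (M : Matrix ι ι ℂ) (a b : EuclideanSpace ℝ ι)
    (x : EuclideanSpace ℂ ι) :
    expectation (M + diagonal fun i => (a i : ℂ)) x
      = expectation (M + diagonal fun i => (b i : ℂ)) x + inner ℝ (a - b) (density x) := by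
  simp only [expectation, density, add_mulVec, WithLp.toLp_add, inner_add_right, Complex.add_re,
    PiLp.inner_apply, RCLike.inner_apply, mulVec_diagonal, Complex.re_sum, add_assoc,
    ← Finset.sum_add_distrib]
  refine Finset.sum_congr rfl fun i _ => ?_
  simp only [mul_assoc, Complex.mul_conj, Complex.re_ofReal_mul, Complex.ofReal_re,
    Complex.normSq_eq_norm_sq, PiLp.sub_apply, conj_trivial]
  ring

theorem add_diagonal_sub_mulVec_eq_zero {M : Matrix ι ι ℂ} {w : ι → ℝ} {r : ℝ} {x : ι → ℂ}
    (h : (M + diagonal fun i => (w i : ℂ)) *ᵥ x = r • x) :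
    (M + diagonal fun i => ((w i - r : ℝ) : ℂ)) *ᵥ x = 0 := by
  ext i
  have hi := congrFun h i
  simp only [add_mulVec, mulVec_diagonal, Pi.add_apply, Pi.smul_apply, Complex.real_smul] at hi ⊢
  simp only [Complex.ofReal_sub, Pi.zero_apply]
  linear_combination hi

theorem hasFDerivAt_expectation_comp_of_mulVec_eq_zero {E : Type*} [NormedAddCommGroup E]
    [NormedSpace ℝ E] {M : Matrix ι ι ℂ} (hM : M.IsHermitian) {φ : E → EuclideanSpace ℂ ι}
    {x₀ : E} (hφ : DifferentiableAt ℝ φ x₀) (hx₀ : M *ᵥ φ x₀ = 0) :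
    HasFDerivAt (fun x => expectation M (φ x)) (0 : E →L[ℝ] ℝ) x₀ := by
  have := hasFDerivAt_inner_apply_self_of_apply_eq_zero (T := toEuclideanCLM (𝕜 := ℂ) M)
    (isSymmetric_toEuclideanLin_iff.2 hM) hφ (by ext i; simp [ofLp_toEuclideanCLM, hx₀])
  have h := Complex.reCLM.hasFDerivAt.comp x₀ this
  rw [ContinuousLinearMap.comp_zero] at h
  exact h

end

theorem ks_potential_functional_stationary_converse_general (d : ℕ) (A : Matrix (Fin d) (Fin d) ℂ)
    (hA : A.IsHermitian)
    (ψ : EuclideanSpace ℝ (Fin d) → EuclideanSpace ℂ (Fin d))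
    (lam : EuclideanSpace ℝ (Fin d) → ℝ)
    (hψ : Differentiable ℝ ψ)
    (heig : ∀ w, (A + Matrix.diagonal fun i => (w i : ℂ)).mulVec (ψ w) = lam w • ψ w)
    (W : EuclideanSpace ℝ (Fin d) → EuclideanSpace ℝ (Fin d))
    (hW : Differentiable ℝ W)
    (v ws₀ : EuclideanSpace ℝ (Fin d))
    (hnondeg : ∀ x : EuclideanSpace ℝ (Fin d),
      (∀ u : EuclideanSpace ℝ (Fin d),
        (inner ℝ x (fderiv ℝ (fun ws' =>
          (show EuclideanSpace ℝ (Fin d) from WithLp.toLp 2 (fun i => ‖ψ (W ws') i‖ ^ 2))) ws₀ u) : ℝ) = 0) →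
      ∃ c : ℝ, ∀ i, x i = c)
    (hstat : fderiv ℝ (fun ws' => (inner ℂ (ψ (W ws'))
        (WithLp.toLp 2 ((A + Matrix.diagonal fun i => (v i : ℂ)).mulVec (ψ (W ws'))) :
          EuclideanSpace ℂ (Fin d)) : ℂ).re) ws₀ = 0) :
    ∃ c : ℝ, ∀ i, v i - W ws₀ i = c := by
  have hφ : Differentiable ℝ fun ws => ψ (W ws) := hψ.comp hW
  set c : EuclideanSpace ℝ (Fin d) := WithLp.toLp 2 fun i => W ws₀ i - lam (W ws₀)
  have hker : (A + diagonal fun i => (c i : ℂ)) *ᵥ ψ (W ws₀) = 0 :=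
    add_diagonal_sub_mulVec_eq_zero (heig (W ws₀))
  have hHerm : (A + diagonal fun i => (c i : ℂ)).IsHermitian :=
    hA.add (isHermitian_diagonal_of_self_adjoint _ (by ext; simp))
  change fderiv ℝ (fun ws => expectation (A + diagonal fun i => (v i : ℂ)) (ψ (W ws))) ws₀ = 0
    at hstat
  simp_rw [expectation_add_diagonal A v c] at hstat
  have hρ : HasFDerivAt (fun ws => inner ℝ (v - c) (density (ψ (W ws))))
      ((innerSL ℝ (v - c)).comp (fderiv ℝ (fun ws => density (ψ (W ws))) ws₀)) ws₀ :=
    (innerSL ℝ (v - c)).hasFDerivAt.comp ws₀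
      ((differentiable_density (ι := Fin d)).comp hφ ws₀ :
        DifferentiableAt ℝ (fun ws => density (ψ (W ws))) ws₀).hasFDerivAt
  rw [((hasFDerivAt_expectation_comp_of_mulVec_eq_zero hHerm (hφ ws₀) hker).fun_add hρ).fderiv,
    zero_add] at hstat
  obtain ⟨k, hk⟩ := hnondeg (v - c) fun u => by
    have := DFunLike.congr_fun hstat u
    simp only [ContinuousLinearMap.comp_apply, innerSL_apply_apply, _root_.zero_apply] at this
    exact this
  refine ⟨k - lam (W ws₀), fun i => ?_⟩
  have := hk i
  simp only [PiLp.sub_apply, c] at this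
  linarith

/-- Converse of Theorem 2: assuming the nondegeneracy condition that the only
vectors orthogonal to the range of the composed density-response map
`u ↦ δ(ρ∘W)/δw_s · u` are the constant vectors, stationarity of the excited-state
Kohn–Sham functional `E_v` at `ws₀` implies that `v - W(ws₀)` is a constant
vector. -/
theorem ks_potential_functional_stationary_converse (d : ℕ) (A : Matrix (Fin d) (Fin d) ℂ)
    (hA : A.IsHermitian)
    (ψ : EuclideanSpace ℝ (Fin d) → EuclideanSpace ℂ (Fin d))
    (lam : EuclideanSpace ℝ (Fin d) → ℝ)
    (hψ : Differentiable ℝ ψ) (hlam : Differentiable ℝ lam)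
    (hnorm : ∀ w, ‖ψ w‖ = 1)
    (heig : ∀ w, (A + Matrix.diagonal fun i => (w i : ℂ)).mulVec (ψ w) = lam w • ψ w)
    (W : EuclideanSpace ℝ (Fin d) → EuclideanSpace ℝ (Fin d))
    (hW : Differentiable ℝ W)
    (v ws₀ : EuclideanSpace ℝ (Fin d))
    (hnondeg : ∀ x : EuclideanSpace ℝ (Fin d),
      (∀ u : EuclideanSpace ℝ (Fin d),
        (inner ℝ x (fderiv ℝ (fun ws' =>
          (show EuclideanSpace ℝ (Fin d) from WithLp.toLp 2 (fun i => ‖ψ (W ws') i‖ ^ 2))) ws₀ u) : ℝ) = 0) →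
      ∃ c : ℝ, ∀ i, x i = c)
    (hstat : fderiv ℝ (fun ws' => (inner ℂ (ψ (W ws'))
        (WithLp.toLp 2 ((A + Matrix.diagonal fun i => (v i : ℂ)).mulVec (ψ (W ws'))) :
          EuclideanSpace ℂ (Fin d)) : ℂ).re) ws₀ = 0) :
    ∃ c : ℝ, ∀ i, v i - W ws₀ i = c :=
  ks_potential_functional_stationary_converse_general d A hA ψ lam hψ heig W hW v ws₀ hnondeg hstat
end

section
/- (Degenerate Hellmann–Feynman) Let d ∈ ℕ and let H, P : ℝ → Matrix (Fin d) (Fin d) ℂ be differentiable families such that for every t: H(t) is Hermitian, P(t) is Hermitian, P(t) * P(t) = P(t), and H(t) * P(t) = P(t) * H(t). Then for every t, the derivative of t ↦ trace (H(t) * P(t)) equals trace ((deriv H t) * P(t)). (The first-order variation of the total energy of an invariant subspace — an ensemble of degenerate eigenstates — equals the trace of the variation of the Hamiltonian against the projection; used to extend Theorem 1 to degenerate states.) -/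
/-! By the product rule, `(tr (H P))' = tr (H' P) + tr (H P')`, so it suffices that
`tr (H P') = 0`. Differentiating `P² = P` gives `P' = P' P + P P'`, and sandwiching this
between two factors `P` gives `P P' P = 0`. Splitting `tr (H P')` along `P' = P' P + P P'`
and using `H P = P H` with cyclicity of the trace, each summand becomes `tr (P P' P H) = 0`. -/

theorem IsIdempotentElem.mul_mul_self_eq_zero {R : Type*} [Ring R] {Q Q' : R}
    (hQ : IsIdempotentElem Q) (hQ' : Q' = Q' * Q + Q * Q') : Q * Q' * Q = 0 := by
  have h : Q * Q' * Q = Q * Q' * Q + Q * Q' * Q :=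
    calc Q * Q' * Q = Q * (Q' * Q + Q * Q') * Q := by rw [← hQ']
      _ = Q * Q' * (Q * Q) + (Q * Q) * Q' * Q := by noncomm_ring
      _ = Q * Q' * Q + Q * Q' * Q := by rw [hQ.eq]
  exact left_eq_add.mp h

theorem Matrix.trace_mul_eq_zero_of_commute_of_isIdempotentElem {n R : Type*} [Fintype n]
    [DecidableEq n] [CommRing R] {A Q Q' : Matrix n n R} (hQ : IsIdempotentElem Q)
    (hQ' : Q' = Q' * Q + Q * Q') (hAQ : Commute A Q) : (A * Q').trace = 0 := by
  have hQQ'Q := hQ.mul_mul_self_eq_zero hQ'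
  have h₁ : (A * Q * Q').trace = 0 :=
    calc (A * Q * Q').trace = (A * Q * (Q * Q')).trace := by
          rw [← mul_assoc, mul_assoc A Q Q, hQ.eq]
      _ = (Q * Q' * (A * Q)).trace := Matrix.trace_mul_comm _ _
      _ = (Q * Q' * Q * A).trace := by rw [hAQ.eq, ← mul_assoc]
      _ = 0 := by rw [hQQ'Q, zero_mul, Matrix.trace_zero]
  have h₂ : (A * (Q' * Q)).trace = (A * Q * Q').trace := by
    rw [← mul_assoc, Matrix.trace_mul_comm, ← mul_assoc, ← hAQ.eq]
  rw [hQ', mul_add, Matrix.trace_add, h₂, ← mul_assoc, h₁, add_zero]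

section EntryDeriv

variable {d : ℕ} {A B : ℝ → Matrix (Fin d) (Fin d) ℂ} {t : ℝ}

theorem hasDerivAt_mul_apply (hA : ∀ i j, DifferentiableAt ℝ (fun s => A s i j) t)
    (hB : ∀ i j, DifferentiableAt ℝ (fun s => B s i j) t) (i j : Fin d) :
    HasDerivAt (fun s => (A s * B s) i j)
      ((entryDeriv A t * B t + A t * entryDeriv B t) i j) t := by
  simp only [Matrix.mul_apply, Matrix.add_apply, ← Finset.sum_add_distrib]
  exact HasDerivAt.fun_sum fun k _ => (hA i k).hasDerivAt.mul (hB k j).hasDerivAt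

theorem hasDerivAt_trace_mul (hA : ∀ i j, DifferentiableAt ℝ (fun s => A s i j) t)
    (hB : ∀ i j, DifferentiableAt ℝ (fun s => B s i j) t) :
    HasDerivAt (fun s => (A s * B s).trace)
      ((entryDeriv A t * B t).trace + (A t * entryDeriv B t).trace) t := by
  rw [← Matrix.trace_add]
  exact HasDerivAt.fun_sum fun i _ => hasDerivAt_mul_apply hA hB i i

theorem entryDeriv_eq_of_idempotent {P : ℝ → Matrix (Fin d) (Fin d) ℂ}
    (hP : ∀ i j, DifferentiableAt ℝ (fun s => P s i j) t) (hidem : ∀ s, P s * P s = P s) :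
    entryDeriv P t = entryDeriv P t * P t + P t * entryDeriv P t := by
  ext i j
  have h := hasDerivAt_mul_apply hP hP i j
  simp only [hidem] at h
  exact h.deriv

end EntryDeriv

theorem degenerate_hellmann_feynman_general (d : ℕ)
    (H P : ℝ → Matrix (Fin d) (Fin d) ℂ)
    (hH : ∀ i j, Differentiable ℝ fun t => H t i j)
    (hP : ∀ i j, Differentiable ℝ fun t => P t i j)
    (hidem : ∀ t, P t * P t = P t)
    (hcomm : ∀ t, H t * P t = P t * H t) (t : ℝ) :
    deriv (fun s => Matrix.trace (H s * P s)) t = Matrix.trace (entryDeriv H t * P t) := by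
  have hHt : ∀ i j, DifferentiableAt ℝ (fun s => H s i j) t := fun i j => hH i j t
  have hPt : ∀ i j, DifferentiableAt ℝ (fun s => P s i j) t := fun i j => hP i j t
  have hvanish : (H t * entryDeriv P t).trace = 0 :=
    Matrix.trace_mul_eq_zero_of_commute_of_isIdempotentElem (hidem t)
      (entryDeriv_eq_of_idempotent hPt hidem) (hcomm t)
  rw [(hasDerivAt_trace_mul hHt hPt).deriv, hvanish, add_zero]

/-- Degenerate Hellmann–Feynman theorem: for a differentiable family of Hermitian
Hamiltonians `H t` and a differentiable family of orthogonal projections `P t`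
onto `H t`-invariant subspaces, the derivative of the ensemble energy
`trace (H t * P t)` equals `trace ((deriv H t) * P t)`. -/
theorem degenerate_hellmann_feynman (d : ℕ)
    (H P : ℝ → Matrix (Fin d) (Fin d) ℂ)
    (hH : ∀ i j, Differentiable ℝ fun t => H t i j)
    (hP : ∀ i j, Differentiable ℝ fun t => P t i j)
    (hHerm : ∀ t, (H t).IsHermitian)
    (hPHerm : ∀ t, (P t).IsHermitian)
    (hidem : ∀ t, P t * P t = P t)
    (hcomm : ∀ t, H t * P t = P t * H t) (t : ℝ) :
    deriv (fun s => Matrix.trace (H s * P s)) t = Matrix.trace (entryDeriv H t * P t) :=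
  degenerate_hellmann_feynman_general d H P hH hP hidem hcomm t
end

section
/- (Theorem 1 for degenerate states, ensemble form) Let d ∈ ℕ, let A be a Hermitian d×d complex matrix, and let P : ℝ^d → Matrix (Fin d) (Fin d) ℂ be differentiable such that for every w ∈ ℝ^d: P(w) is Hermitian, P(w) * P(w) = P(w), (A + diag(w)) * P(w) = P(w) * (A + diag(w)), and trace (P(w)) = N for a fixed constant N. Fix v ∈ ℝ^d and define E_v : ℝ^d → ℝ by E_v(w) = Re (trace ((A + diag(v)) * P(w))). If w₀ ∈ ℝ^d is such that v − w₀ is a constant vector (all components equal), then the Fréchet derivative of E_v at w₀ is the zero linear map. -/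
/-!
Differentiating `P w * P w = P w` and `trace (P w) = N` shows that every directional derivative
`Q` of `P` at `w₀` satisfies `Q = Q P + P Q` (hence `P Q P = 0`) and `trace Q = 0`. With
`H = A + diag w₀` we have `A + diag v = H + c • 1`, so the derivative of `E_v` in direction `u` is
`Re (trace (H Q) + c trace Q)`. Since `H` commutes with `P`,
`trace (H Q) = trace (H Q P) + trace (H P Q) = 2 trace (P Q P H) = 0`.
-/

open Matrix

theorem IsIdempotentElem.mul_mul_eq_zero_of_eq_mul_add_mul {R : Type*} [NonUnitalRing R] {p q : R}
    (hp : IsIdempotentElem p) (hq : q = q * p + p * q) : p * q * p = 0 := by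
  have h : p * q * p = p * q * p + p * q * p := by
    conv_lhs => rw [hq]
    simp only [mul_add, add_mul, mul_assoc, hp.eq]
    rw [← mul_assoc p p, hp.eq]
  simpa using h

theorem Matrix.trace_mul_eq_zero_of_commute_of_eq_mul_add_mul {n R : Type*} [Fintype n]
    [CommRing R] {H P Q : Matrix n n R} (hP : IsIdempotentElem P) (hHP : Commute H P)
    (hQ : Q = Q * P + P * Q) : trace (H * Q) = 0 := by
  have hHPQ : trace (H * P * Q) = 0 := calc
    trace (H * P * Q) = trace (H * P * (P * Q)) := by rw [← mul_assoc, mul_assoc H P P, hP.eq]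
    _ = trace (P * Q * P * H) := by rw [trace_mul_comm, hHP.eq, ← mul_assoc]
    _ = 0 := by rw [hP.mul_mul_eq_zero_of_eq_mul_add_mul hQ, zero_mul, trace_zero]
  calc trace (H * Q) = trace (H * Q * P) + trace (H * P * Q) := by
        conv_lhs => rw [hQ]
        rw [mul_add, trace_add, mul_assoc, mul_assoc]
    _ = 0 := by rw [trace_mul_cycle, ← hHP.eq, hHPQ, add_zero]

theorem Matrix.diagonal_eq_diagonal_add_smul_one {n R : Type*} [DecidableEq n] [CommRing R]
    {d e : n → R} {c : R} (h : ∀ i, d i = e i + c) : diagonal d = diagonal e + c • 1 := by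
  rw [smul_one_eq_diagonal, diagonal_add]
  exact congrArg diagonal (funext h)

section Calculus

-- The entrywise sup norm, so that `differentiable_pi` turns entrywise differentiability into
-- differentiability of the matrix-valued map.
attribute [local instance] Matrix.normedAddCommGroup Matrix.normedSpace

variable {E n : Type*} [NormedAddCommGroup E] [Fintype n]

section

variable {𝕜 R : Type*} [NontriviallyNormedField 𝕜] [CompleteSpace 𝕜] [NormedSpace 𝕜 E]
  [NormedCommRing R] [NormedAlgebra 𝕜 R] [FiniteDimensional 𝕜 R]
  {P : E → Matrix n n R} {P' : E →L[𝕜] Matrix n n R} {x : E}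

theorem HasFDerivAt.eq_mul_add_mul_of_isIdempotentElem (hP : HasFDerivAt P P' x)
    (hidem : ∀ y, IsIdempotentElem (P y)) (u : E) : P' u = P' u * P x + P x * P' u := by
  have hsq := (LinearMap.mul 𝕜 (Matrix n n R)).toContinuousBilinearMap.hasFDerivAt_of_bilinear hP hP
  have := hsq.congr_of_eventuallyEq (Filter.Eventually.of_forall fun y => (hidem y).eq.symm)
  conv_lhs => rw [hP.unique this]
  exact add_comm (P x * P' u) (P' u * P x)

theorem HasFDerivAt.trace_eq_zero_of_trace_eq_const (hP : HasFDerivAt P P' x) {N : R}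
    (htrace : ∀ y, trace (P y) = N) (u : E) : trace (P' u) = 0 := by
  have h := (LinearMap.toContinuousLinearMap (traceLinearMap n 𝕜 R)).hasFDerivAt.comp x hP
  simp only [Function.comp_def, LinearMap.coe_toContinuousLinearMap', traceLinearMap_apply,
    htrace] at h
  exact (congrArg (· u) ((hasFDerivAt_const N x).unique h)).symm

end

theorem fderiv_re_trace_mul_apply [NormedSpace ℝ E] {P : E → Matrix n n ℂ}
    {P' : E →L[ℝ] Matrix n n ℂ} {x : E} (hP : HasFDerivAt P P' x) (M : Matrix n n ℂ) (u : E) :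
    fderiv ℝ (fun y => (trace (M * P y)).re) x u = (trace (M * P' u)).re := by
  let energy : Matrix n n ℂ →L[ℝ] ℝ :=
    (Complex.reLm.comp ((traceLinearMap n ℝ ℂ).comp (LinearMap.mulLeft ℝ M))).toContinuousLinearMap
  have h : HasFDerivAt (fun y => (trace (M * P y)).re) (energy.comp P') x :=
    energy.hasFDerivAt.comp x hP
  rw [h.fderiv]
  rfl

end Calculus

theorem ensemble_potential_functional_stationary_general (d : ℕ) (A : Matrix (Fin d) (Fin d) ℂ)
    (P : EuclideanSpace ℝ (Fin d) → Matrix (Fin d) (Fin d) ℂ)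
    (hP : ∀ i j, Differentiable ℝ fun w => P w i j)
    (hidem : ∀ w, P w * P w = P w)
    (hcomm : ∀ w, (A + Matrix.diagonal fun i => (w i : ℂ)) * P w
      = P w * (A + Matrix.diagonal fun i => (w i : ℂ)))
    (N : ℂ) (htrace : ∀ w, Matrix.trace (P w) = N)
    (v w₀ : EuclideanSpace ℝ (Fin d))
    (hconst : ∃ c : ℝ, ∀ i, v i - w₀ i = c) :
    fderiv ℝ (fun w =>
      (Matrix.trace ((A + Matrix.diagonal fun i => (v i : ℂ)) * P w)).re) w₀ = 0 := by
  obtain ⟨c, hc⟩ := hconst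
  have hP' : HasFDerivAt P (fderiv ℝ P w₀) w₀ :=
    (differentiable_pi.2 fun i => differentiable_pi.2 (hP i)) w₀ |>.hasFDerivAt
  have hshift : (diagonal fun i => (v i : ℂ)) = (diagonal fun i => (w₀ i : ℂ)) + (c : ℂ) • 1 :=
    diagonal_eq_diagonal_add_smul_one fun i => by rw [← hc i]; push_cast; ring
  ext u
  rw [fderiv_re_trace_mul_apply hP', hshift, ← add_assoc, add_mul, trace_add,
    trace_mul_eq_zero_of_commute_of_eq_mul_add_mul (hidem w₀) (hcomm w₀)
      (hP'.eq_mul_add_mul_of_isIdempotentElem hidem u),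
    smul_mul, one_mul, trace_smul, hP'.trace_eq_zero_of_trace_eq_const htrace u]
  simp

/-- Theorem 1 for degenerate states, ensemble form: given a differentiable family
`w ↦ P w` of orthogonal projections commuting with `A + diag w` and of constant
trace `N`, the ensemble energy functional
`E_v(w) = Re (trace ((A + diag v) * P w))` is stationary at any `w₀` such that
`v - w₀` is a constant vector. -/
theorem ensemble_potential_functional_stationary (d : ℕ) (A : Matrix (Fin d) (Fin d) ℂ)
    (hA : A.IsHermitian)
    (P : EuclideanSpace ℝ (Fin d) → Matrix (Fin d) (Fin d) ℂ)
    (hP : ∀ i j, Differentiable ℝ fun w => P w i j)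
    (hHerm : ∀ w, (P w).IsHermitian)
    (hidem : ∀ w, P w * P w = P w)
    (hcomm : ∀ w, (A + Matrix.diagonal fun i => (w i : ℂ)) * P w
      = P w * (A + Matrix.diagonal fun i => (w i : ℂ)))
    (N : ℂ) (htrace : ∀ w, Matrix.trace (P w) = N)
    (v w₀ : EuclideanSpace ℝ (Fin d))
    (hconst : ∃ c : ℝ, ∀ i, v i - w₀ i = c) :
    fderiv ℝ (fun w =>
      (Matrix.trace ((A + Matrix.diagonal fun i => (v i : ℂ)) * P w)).re) w₀ = 0 :=
  ensemble_potential_functional_stationary_general d A P hP hidem hcomm N htrace v w₀ hconst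
end
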